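/- arXiv:2105.07636 — 3 statements merged into one kernel-verified Lean document; each statement's English description precedes it below -/
import Mathlib

section
/- Let H be a real Hilbert space, z_1,…,z_n ∈ H and C > 0. Define the one-class hinge objective F(w) = (1/2)‖w‖² + C·∑_{i=1}^n max(0, 1 − ⟨w, z_i⟩). Suppose w₀ minimizes F over H and w₀ ≠ 0. Then there exists δ > 0 such that, setting ν = 1/(C·n·δ), the pair (δ·w₀, δ) minimizes the one-class ν-SVM objective G(ŵ, ρ) = (1/2)‖ŵ‖² + (1/(ν·n))·∑_{i=1}^n max(0, ρ − ⟨ŵ, z_i⟩) − ρ over all (ŵ, ρ) ∈ H × ℝ. -/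
open Finset

/-- Subgradient inequality for the hinge function `x ↦ max 0 x`. -/
lemma hinge_subgrad (β x y : ℝ) (h0 : 0 ≤ β) (h1 : β ≤ 1)
    (hp : 0 < x → β = 1) (hn : x < 0 → β = 0) :
    max 0 x + β * (y - x) ≤ max 0 y := by
  rcases lt_trichotomy x 0 with h | h | h
  · rw [hn h, max_eq_left h.le]
    simpa using le_max_left 0 y
  · subst h
    have h2 := le_max_left 0 y
    have h3 := le_max_right 0 y
    simp only [max_self]
    rcases le_or_gt 0 y with hy | hy
    · nlinarith [mul_nonneg (sub_nonneg.mpr h1) hy]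
    · nlinarith [mul_nonpos_of_nonneg_of_nonpos h0 hy.le]
  · rw [hp h, max_eq_right h.le]
    have := le_max_right 0 y
    linarith

/-- If a point's inner ℝ products are dominated by the support function of the image of a box
under `β ↦ ∑ βᵢ • zᵢ`, then it lies in that image. -/
lemma mem_box_image_of_support
    {H : Type*} [NormedAddCommGroup H] [InnerProductSpace ℝ H] [CompleteSpace H]
    (n : ℕ) (z : Fin n → H) (lo hi : Fin n → ℝ) (q : H)
    (hsupp : ∀ v : H, ∃ β : Fin n → ℝ, (∀ i, β i ∈ Set.Icc (lo i) (hi i)) ∧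
      (inner ℝ q v : ℝ) ≤ ∑ i, β i * (inner ℝ v (z i) : ℝ)) :
    ∃ β : Fin n → ℝ, (∀ i, β i ∈ Set.Icc (lo i) (hi i)) ∧ q = ∑ i, β i • z i := by
  classical
  let L : (Fin n → ℝ) →ₗ[ℝ] H :=
    { toFun := fun β => ∑ i, β i • z i
      map_add' := by
        intro a b
        simp [add_smul, Finset.sum_add_distrib]
      map_smul' := by
        intro r a
        simp [smul_smul, Finset.smul_sum] }
  let Box : Set (Fin n → ℝ) := Set.univ.pi fun i => Set.Icc (lo i) (hi i)
  have hconv : Convex ℝ Box := convex_pi fun i _ => convex_Icc _ _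
  have hcomp : IsCompact Box := isCompact_univ_pi fun i => isCompact_Icc
  have hcont : Continuous fun β : Fin n → ℝ => ∑ i, β i • z i :=
    continuous_finset_sum _ fun i _ => (continuous_apply i).smul continuous_const
  have hKconv : Convex ℝ (L '' Box) := hconv.linear_image L
  have hKclosed : IsClosed (L '' Box) := (hcomp.image hcont).isClosed
  have hq : q ∈ L '' Box := by
    by_contra hq
    obtain ⟨f, u, hfu, huq⟩ := geometric_hahn_banach_closed_point hKconv hKclosed hq
    set v := (InnerProductSpace.toDual ℝ H).symm f with hv
    have hfx : ∀ x : H, f x = (inner ℝ v x : ℝ) := fun x =>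
      (InnerProductSpace.toDual_symm_apply).symm
    obtain ⟨β, hβ, hle⟩ := hsupp v
    have hmem : L β ∈ L '' Box := ⟨β, fun i _ => hβ i, rfl⟩
    have h1 : f (L β) < u := hfu _ hmem
    have h2 : f (L β) = ∑ i, β i * (inner ℝ v (z i) : ℝ) := by
      rw [hfx]
      simp [L, inner_sum, real_inner_smul_right]
    have h3 : f q = (inner ℝ q v : ℝ) := by rw [hfx, real_inner_comm]
    rw [h2] at h1
    rw [h3] at huq
    linarith
  obtain ⟨β, hβ, hβq⟩ := hq
  exact ⟨β, fun i => hβ i (Set.mem_univ i), hβq.symm⟩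

set_option maxHeartbeats 1000000 in
/-- Equivalence between the one-class hinge SVM and the one-class ν-SVM:
if `w₀ ≠ 0` minimizes the hinge objective `F`, then there exists `δ > 0` such that,
with `ν = 1/(C·n·δ)`, the pair `(δ • w₀, δ)` minimizes the ν-SVM objective `G`. -/
theorem hinge_nu_svm_equivalence
    {H : Type*} [NormedAddCommGroup H] [InnerProductSpace ℝ H] [CompleteSpace H]
    (n : ℕ) (z : Fin n → H) (C : ℝ) (hC : 0 < C)
    (F : H → ℝ)
    (hF : F = fun w => (1 / 2) * ‖w‖ ^ 2 + C * ∑ i, max 0 (1 - (inner ℝ w (z i) : ℝ)))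
    (w₀ : H) (hmin : ∀ w : H, F w₀ ≤ F w) (hw₀ : w₀ ≠ 0) :
    ∃ δ : ℝ, 0 < δ ∧
      ∀ (w' : H) (ρ : ℝ),
        ((1 / 2) * ‖δ • w₀‖ ^ 2
            + (1 / ((1 / (C * n * δ)) * n)) * ∑ i, max 0 (δ - (inner ℝ (δ • w₀) (z i) : ℝ)) - δ)
          ≤ (1 / 2) * ‖w'‖ ^ 2
            + (1 / ((1 / (C * n * δ)) * n)) * ∑ i, max 0 (ρ - (inner ℝ w' (z i) : ℝ)) - ρ := by
  classical
  subst hF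
  simp only at hmin
  -- dispose of the degenerate case n = 0
  rcases Nat.eq_zero_or_pos n with rfl | hnpos
  · exfalso
    have h0 := hmin 0
    simp at h0
    have : ‖w₀‖ ^ 2 ≤ 0 := by
      have hsum : (0:ℝ) ≤ ∑ i : Fin 0, max 0 (1 - (inner ℝ w₀ (z i) : ℝ)) :=
        Finset.sum_nonneg fun i _ => le_max_left _ _
      nlinarith
    exact hw₀ (by simpa using norm_le_zero_iff.mp (by nlinarith [norm_nonneg w₀]))
  haveI : Nonempty (Fin n) := Fin.pos_iff_nonempty.mp hnpos
  set c : Fin n → ℝ := fun i => (inner ℝ w₀ (z i) : ℝ) with hc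
  -- directional derivative inequality
  have hA : ∀ v : H, (inner ℝ w₀ v : ℝ) ≤
      C * ∑ i, (if c i < 1 then (inner ℝ v (z i) : ℝ)
        else if c i ≤ 1 then max 0 (inner ℝ v (z i) : ℝ) else 0) := by
    intro v
    set e : Fin n → ℝ := fun i => (inner ℝ v (z i) : ℝ) with he
    set ψ : Fin n → ℝ := fun i =>
      (if c i < 1 then e i else if c i ≤ 1 then max 0 (e i) else 0) with hψ
    set τ : Fin n → ℝ := fun i =>
      if c i < 1 then (if e i < 0 then (1 - c i) / (-(e i)) else 1)
      else if 1 < c i then (if 0 < e i then (c i - 1) / (e i) else 1) else 1 with hτ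
    have hτpos : ∀ i, 0 < τ i := by
      intro i
      simp only [hτ]
      split_ifs with h1 h2 h3 h4
      · exact div_pos (by linarith) (by linarith)
      · norm_num
      · exact div_pos (by linarith) h4
      · norm_num
      · norm_num
    set t₀ : ℝ := Finset.univ.inf' Finset.univ_nonempty τ with ht₀def
    have ht₀pos : 0 < t₀ := by
      rw [ht₀def, Finset.lt_inf'_iff]
      exact fun i _ => hτpos i
    have ht₀le : ∀ i, t₀ ≤ τ i := fun i => Finset.inf'_le _ (Finset.mem_univ i)
    have key : ∀ t : ℝ, 0 < t → t ≤ t₀ → ∀ i,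
        max 0 (1 - (inner ℝ (w₀ - t • v) (z i) : ℝ)) ≤ max 0 (1 - c i) + t * ψ i := by
      intro t ht htle i
      have hiz : (inner ℝ (w₀ - t • v) (z i) : ℝ) = c i - t * e i := by
        simp [inner_sub_left, real_inner_smul_left, hc, he]
      rw [hiz]
      have hti : t ≤ τ i := le_trans htle (ht₀le i)
      rcases lt_trichotomy (c i) 1 with h1 | h1 | h1
      · have hψi : ψ i = e i := by simp [hψ, h1]
        have hmax : max 0 (1 - c i) = 1 - c i := max_eq_right (by linarith)
        rw [hψi, hmax]
        have hX : 0 ≤ 1 - (c i - t * e i) := by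
          rcases lt_or_ge (e i) 0 with hei | hei
          · have hτi : τ i = (1 - c i) / (-(e i)) := by simp [hτ, h1, hei]
            rw [hτi] at hti
            have := (le_div_iff₀ (by linarith : (0:ℝ) < -(e i))).mp hti
            nlinarith
          · nlinarith
        rw [max_eq_right hX]
        ring_nf
        linarith
      · have hψi : ψ i = max 0 (e i) := by simp [hψ, h1]
        have hmax : max 0 (1 - c i) = 0 := by rw [h1]; simp
        rw [hψi, hmax, h1]
        have : (1 : ℝ) - (1 - t * e i) = t * e i := by ring
        rw [this]
        rcases le_or_gt (e i) 0 with hei | hei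
        · have h4 : t * e i ≤ 0 := mul_nonpos_of_nonneg_of_nonpos ht.le hei
          rw [max_eq_left h4]
          have : max 0 (e i) = 0 := max_eq_left hei
          rw [this]
          nlinarith
        · have h4 : 0 ≤ t * e i := by positivity
          rw [max_eq_right h4, max_eq_right hei.le]
          linarith
      · have hψi : ψ i = 0 := by
          simp only [hψ]
          rw [if_neg (by linarith), if_neg (by linarith)]
        have hmax : max 0 (1 - c i) = 0 := max_eq_left (by linarith)
        rw [hψi, hmax]
        have hX : 1 - (c i - t * e i) ≤ 0 := by
          rcases lt_or_ge 0 (e i) with hei | hei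
          · have hτi : τ i = (c i - 1) / (e i) := by
              simp only [hτ]
              rw [if_neg (by linarith), if_pos h1, if_pos hei]
            rw [hτi] at hti
            have := (le_div_iff₀ hei).mp hti
            nlinarith
          · nlinarith
        rw [max_eq_left hX]
        simp
    have hexp : ∀ t : ℝ, 0 < t → t ≤ t₀ →
        (inner ℝ w₀ v : ℝ) ≤ C * ∑ i, ψ i + t * ((1/2) * ‖v‖ ^ 2) := by
      intro t ht htle
      have hm := hmin (w₀ - t • v)
      have hnorm : ‖w₀ - t • v‖ ^ 2
          = ‖w₀‖ ^ 2 - 2 * (t * (inner ℝ w₀ v : ℝ)) + t ^ 2 * ‖v‖ ^ 2 := by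
        rw [norm_sub_sq_real, real_inner_smul_right, norm_smul]
        rw [Real.norm_eq_abs, abs_of_pos ht]
        ring
      have hsum : ∑ i, max 0 (1 - (inner ℝ (w₀ - t • v) (z i) : ℝ))
          ≤ ∑ i, max 0 (1 - c i) + t * ∑ i, ψ i := by
        rw [Finset.mul_sum, ← Finset.sum_add_distrib]
        exact Finset.sum_le_sum fun i _ => key t ht htle i
      have hsum' : C * ∑ i, max 0 (1 - (inner ℝ (w₀ - t • v) (z i) : ℝ))
          ≤ C * (∑ i, max 0 (1 - c i)) + C * (t * ∑ i, ψ i) := by nlinarith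
      have h5 : 0 ≤ t * (C * ∑ i, ψ i + t * ((1/2) * ‖v‖ ^ 2) - (inner ℝ w₀ v : ℝ)) := by
        simp only [hc] at hsum'
        nlinarith [hm, hnorm, hsum']
      nlinarith [h5, ht]
    by_contra hcon
    push_neg at hcon
    set ε := (inner ℝ w₀ v : ℝ) - C * ∑ i, ψ i with hε
    have hεpos : 0 < ε := by
      simp only [hε, hψ]
      simp only [hψ] at hcon
      linarith
    set t := min t₀ (ε / (‖v‖ ^ 2 + 1)) with htdef
    have htpos : 0 < t := lt_min ht₀pos (by positivity)
    have h6 := hexp t htpos (min_le_left _ _)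
    have h7 : t * ((1/2) * ‖v‖ ^ 2) < ε := by
      have h8 : t ≤ ε / (‖v‖ ^ 2 + 1) := min_le_right _ _
      have h9 : t * ((1/2) * ‖v‖ ^ 2) ≤ (ε / (‖v‖ ^ 2 + 1)) * ((1/2) * ‖v‖ ^ 2) :=
        mul_le_mul_of_nonneg_right h8 (by positivity)
      have h10 : (ε / (‖v‖ ^ 2 + 1)) * ((1/2) * ‖v‖ ^ 2) < ε := by
        rw [div_mul_eq_mul_div, div_lt_iff₀ (by positivity)]
        nlinarith [sq_nonneg ‖v‖]
      linarith
    simp only [hε] at h7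
    linarith
  -- extract the subgradient certificate β
  have hsupp : ∀ v : H, ∃ β : Fin n → ℝ,
      (∀ i, β i ∈ Set.Icc (if c i < 1 then (1:ℝ) else 0) (if c i ≤ 1 then (1:ℝ) else 0)) ∧
      (inner ℝ w₀ v : ℝ) ≤ ∑ i, β i * (inner ℝ v (C • z i) : ℝ) := by
    intro v
    refine ⟨fun i => if c i < 1 then 1 else if c i ≤ 1 ∧ 0 < (inner ℝ v (z i) : ℝ) then 1 else 0,
      ?_, ?_⟩
    · intro i
      by_cases h1 : c i < 1
      · simp [h1, h1.le]
      · by_cases h2 : c i ≤ 1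
        · simp only [if_neg h1, if_pos h2]
          split_ifs <;> norm_num
        · simp only [if_neg h1, if_neg h2]
          rw [if_neg (by tauto)]
          norm_num
    · have := hA v
      have heq : ∑ i, (if c i < 1 then (1:ℝ)
            else if c i ≤ 1 ∧ 0 < (inner ℝ v (z i) : ℝ) then 1 else 0) * (inner ℝ v (C • z i) : ℝ)
          = C * ∑ i, (if c i < 1 then (inner ℝ v (z i) : ℝ)
            else if c i ≤ 1 then max 0 (inner ℝ v (z i) : ℝ) else 0) := by
        rw [Finset.mul_sum]
        refine Finset.sum_congr rfl fun i _ => ?_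
        rw [real_inner_smul_right]
        by_cases h1 : c i < 1
        · simp [h1]
        · by_cases h2 : c i ≤ 1
          · simp only [if_neg h1, if_pos h2]
            rcases lt_or_ge 0 ((inner ℝ v (z i) : ℝ)) with h3 | h3
            · rw [if_pos ⟨h2, h3⟩, max_eq_right h3.le]; ring
            · rw [if_neg (by rintro ⟨-, h⟩; linarith), max_eq_left h3]; ring
          · simp only [if_neg h1, if_neg h2]
            rw [if_neg (by tauto)]
            ring
      rw [heq]
      exact this
  obtain ⟨β, hβmem, hw₀eq⟩ := mem_box_image_of_support n (fun i => C • z i)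
    (fun i => if c i < 1 then (1:ℝ) else 0) (fun i => if c i ≤ 1 then (1:ℝ) else 0) w₀ hsupp
  have hβ0 : ∀ i, 0 ≤ β i := by
    intro i
    have := (hβmem i).1
    split_ifs at this <;> linarith
  have hβ1 : ∀ i, β i ≤ 1 := by
    intro i
    have := (hβmem i).2
    split_ifs at this <;> linarith
  have hβlt : ∀ i, c i < 1 → β i = 1 := by
    intro i h
    have h1 := (hβmem i).1
    rw [if_pos h] at h1
    exact le_antisymm (hβ1 i) h1
  have hβgt : ∀ i, 1 < c i → β i = 0 := by
    intro i h
    have h1 := (hβmem i).2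
    rw [if_neg (by linarith)] at h1
    exact le_antisymm h1 (hβ0 i)
  set S := ∑ i, β i with hSdef
  set Q : H := ∑ i, β i • z i with hQdef
  have hw₀Q : w₀ = C • Q := by
    rw [hw₀eq, hQdef, Finset.smul_sum]
    exact Finset.sum_congr rfl fun i _ => smul_comm _ _ _
  have hSpos : 0 < S := by
    rcases lt_or_eq_of_le (Finset.sum_nonneg fun i _ => hβ0 i) with h | h
    · exact h
    · exfalso
      apply hw₀
      have hall : ∀ i ∈ Finset.univ, β i = 0 :=
        (Finset.sum_eq_zero_iff_of_nonneg fun i _ => hβ0 i).mp h.symm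
      rw [hw₀eq]
      exact Finset.sum_eq_zero fun i hi => by rw [hall i hi, zero_smul]
  set δ : ℝ := (C * S)⁻¹ with hδdef
  have hδpos : 0 < δ := by positivity
  have hCδS : C * δ * S = 1 := by
    rw [hδdef]
    field_simp
  refine ⟨δ, hδpos, ?_⟩
  intro w' ρ
  have hn0 : (n : ℝ) ≠ 0 := Nat.cast_ne_zero.mpr hnpos.ne'
  have hcoef : (1 : ℝ) / ((1 / (C * n * δ)) * n) = C * δ := by
    field_simp
  rw [hcoef]
  set wh : H := δ • w₀ with hwhdef
  have hwhQ : wh = (C * δ) • Q := by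
    rw [hwhdef, hw₀Q, smul_smul, mul_comm]
  -- per-coordinate hinge subgradient inequality
  have h2 : ∀ i, max 0 (δ - (inner ℝ wh (z i) : ℝ))
      + β i * ((ρ - (inner ℝ w' (z i) : ℝ)) - (δ - (inner ℝ wh (z i) : ℝ)))
      ≤ max 0 (ρ - (inner ℝ w' (z i) : ℝ)) := by
    intro i
    have hwhz : (inner ℝ wh (z i) : ℝ) = δ * c i := by
      rw [hwhdef, real_inner_smul_left]
    refine hinge_subgrad _ _ _ (hβ0 i) (hβ1 i) ?_ ?_
    · intro h
      rw [hwhz] at h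
      have : c i < 1 := by nlinarith
      exact hβlt i this
    · intro h
      rw [hwhz] at h
      have : 1 < c i := by nlinarith
      exact hβgt i this
  have h2sum : ∑ i, max 0 (δ - (inner ℝ wh (z i) : ℝ))
      + ∑ i, β i * ((ρ - (inner ℝ w' (z i) : ℝ)) - (δ - (inner ℝ wh (z i) : ℝ)))
      ≤ ∑ i, max 0 (ρ - (inner ℝ w' (z i) : ℝ)) := by
    rw [← Finset.sum_add_distrib]
    exact Finset.sum_le_sum fun i _ => h2 i
  set A := (inner ℝ w' Q : ℝ) with hAdef
  set Bq := (inner ℝ wh Q : ℝ) with hBqdef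
  have hQw' : A = ∑ i, β i * (inner ℝ w' (z i) : ℝ) := by
    rw [hAdef, hQdef]
    simp [inner_sum, real_inner_smul_right]
  have hQwh : Bq = ∑ i, β i * (inner ℝ wh (z i) : ℝ) := by
    rw [hBqdef, hQdef]
    simp [inner_sum, real_inner_smul_right]
  have h3 : ∑ i, β i * ((ρ - (inner ℝ w' (z i) : ℝ)) - (δ - (inner ℝ wh (z i) : ℝ)))
      = S * (ρ - δ) - A + Bq := by
    rw [hQw', hQwh, hSdef, Finset.sum_mul, ← Finset.sum_sub_distrib, ← Finset.sum_add_distrib]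
    exact Finset.sum_congr rfl fun i _ => by ring
  rw [h3] at h2sum
  have h2' := mul_le_mul_of_nonneg_left h2sum (by positivity : (0:ℝ) ≤ C * δ)
  have e1 : (inner ℝ w' wh : ℝ) = C * δ * A := by
    rw [hwhQ, real_inner_smul_right, hAdef]
  have e2 : ‖wh‖ ^ 2 = C * δ * Bq := by
    rw [← real_inner_self_eq_norm_sq]
    nth_rewrite 2 [hwhQ]
    rw [real_inner_smul_right, hBqdef]
  have f2 : (0:ℝ) ≤ ‖w'‖ ^ 2 - 2 * (inner ℝ w' wh : ℝ) + ‖wh‖ ^ 2 := by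
    rw [← norm_sub_sq_real]
    positivity
  have g1 : C * δ * (S * (ρ - δ)) = ρ - δ := by
    linear_combination (ρ - δ) * hCδS
  nlinarith [h2', e1, e2, f2, g1]
end

section
/- Let H be a real inner product space, z_1,…,z_n ∈ H and Λ > 0. Then E_σ[sup_{w ∈ H, ‖w‖ ≤ Λ} |(2/n)·∑_{i=1}^n σ_i·⟨w, z_i⟩|] ≤ (2Λ/n)·√(∑_{i=1}^n ‖z_i‖²), where σ_1,…,σ_n are independent uniform {−1,+1}-valued random variables. -/
/-!
Writing `S ε = ∑ᵢ σᵢ zᵢ` for the signed sum, the supremum of `|⟪w, S ε⟫|` over the ball of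
radius `Λ` is `Λ ‖S ε‖`, attained at `w = (Λ / ‖S ε‖) S ε`. Averaging over signs,
Cauchy–Schwarz gives `𝔼 ‖S‖ ≤ √(𝔼 ‖S‖²)`, and since distinct signs are uncorrelated,
`𝔼 ‖S‖² = ∑ᵢ ‖zᵢ‖²`.
-/

open Finset

noncomputable section

def boolSign (b : Bool) : ℝ := if b then 1 else -1

@[simp]
lemma boolSign_not (b : Bool) : boolSign (!b) = -boolSign b := by
  cases b <;> simp [boolSign]

@[simp]
lemma boolSign_mul_self (b : Bool) : boolSign b * boolSign b = 1 := by
  cases b <;> simp [boolSign]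

section SignSums

variable {ι : Type*} [Fintype ι]

lemma sum_boolSign_mul_boolSign_of_ne [DecidableEq ι] {i j : ι} (hij : i ≠ j) :
    ∑ ε : ι → Bool, boolSign (ε i) * boolSign (ε j) = 0 := by
  let flip : (ι → Bool) → ι → Bool := fun ε => Function.update ε i (!ε i)
  have flip_involutive : Function.Involutive flip := fun ε => by simp [flip]
  have flip_negates : ∀ ε, boolSign (flip ε i) * boolSign (flip ε j)
      = -(boolSign (ε i) * boolSign (ε j)) := fun ε => by
    simp [flip, Function.update_of_ne hij.symm]
  have h := Equiv.sum_comp flip_involutive.toPerm fun ε => boolSign (ε i) * boolSign (ε j)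
  simp only [Function.Involutive.coe_toPerm, flip_negates, sum_neg_distrib] at h
  linarith

variable {E : Type*} [NormedAddCommGroup E] [InnerProductSpace ℝ E]

def signedSum (ε : ι → Bool) (z : ι → E) : E := ∑ i, boolSign (ε i) • z i

lemma inner_signedSum (ε : ι → Bool) (z : ι → E) (w : E) :
    inner ℝ w (signedSum ε z) = ∑ i, boolSign (ε i) * inner ℝ w (z i) := by
  simp only [signedSum, inner_sum, real_inner_smul_right]

lemma sum_norm_signedSum_sq [DecidableEq ι] (z : ι → E) :
    ∑ ε : ι → Bool, ‖signedSum ε z‖ ^ 2 = 2 ^ Fintype.card ι * ∑ i, ‖z i‖ ^ 2 := by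
  have sum_sign_mul_sign : ∀ i j : ι, ∑ ε : ι → Bool, boolSign (ε i) * boolSign (ε j)
      = if i = j then 2 ^ Fintype.card ι else 0 := by
    intro i j
    split_ifs with hij
    · simp [hij]
    · exact sum_boolSign_mul_boolSign_of_ne hij
  calc ∑ ε : ι → Bool, ‖signedSum ε z‖ ^ 2
      = ∑ ε : ι → Bool, ∑ i, ∑ j, boolSign (ε i) * boolSign (ε j) * inner ℝ (z i) (z j) := by
        refine sum_congr rfl fun ε _ => ?_
        rw [← real_inner_self_eq_norm_sq, signedSum, sum_inner]
        refine sum_congr rfl fun i _ => ?_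
        rw [real_inner_smul_left, inner_sum, mul_sum]
        refine sum_congr rfl fun j _ => ?_
        rw [real_inner_smul_right]
        ring
    _ = ∑ i, ∑ j, (∑ ε : ι → Bool, boolSign (ε i) * boolSign (ε j)) * inner ℝ (z i) (z j) := by
        simp only [sum_mul]
        rw [sum_comm]
        exact sum_congr rfl fun _ _ => sum_comm
    _ = 2 ^ Fintype.card ι * ∑ i, ‖z i‖ ^ 2 := by
        simp [sum_sign_mul_sign, mul_sum]

lemma sum_norm_signedSum_le [DecidableEq ι] (z : ι → E) :
    ∑ ε : ι → Bool, ‖signedSum ε z‖ ≤ 2 ^ Fintype.card ι * √(∑ i, ‖z i‖ ^ 2) := by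
  have hcard : ((univ : Finset (ι → Bool)).card : ℝ) = 2 ^ Fintype.card ι := by simp
  calc ∑ ε : ι → Bool, ‖signedSum ε z‖
      ≤ √((univ : Finset (ι → Bool)).card * ∑ ε : ι → Bool, ‖signedSum ε z‖ ^ 2) :=
        Real.le_sqrt_of_sq_le (sq_sum_le_card_mul_sum_sq ..)
    _ = √((2 ^ Fintype.card ι) ^ 2 * ∑ i, ‖z i‖ ^ 2) := by
        rw [hcard, sum_norm_signedSum_sq, ← mul_assoc, sq]
    _ = 2 ^ Fintype.card ι * √(∑ i, ‖z i‖ ^ 2) := by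
        rw [Real.sqrt_mul' _ (sum_nonneg fun _ _ => by positivity), Real.sqrt_sq (by positivity)]

end SignSums

lemma isGreatest_abs_inner_closedBall {E : Type*} [NormedAddCommGroup E] [InnerProductSpace ℝ E]
    (v : E) {Λ : ℝ} (hΛ : 0 ≤ Λ) :
    IsGreatest {r : ℝ | ∃ w : E, ‖w‖ ≤ Λ ∧ r = |inner ℝ w v|} (Λ * ‖v‖) := by
  refine ⟨?_, ?_⟩
  · rcases eq_or_ne v 0 with rfl | hv
    · exact ⟨0, by simpa using hΛ, by simp⟩
    have hv' : ‖v‖ ≠ 0 := norm_ne_zero_iff.mpr hv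
    refine ⟨(Λ / ‖v‖) • v, ?_, ?_⟩
    · rw [norm_smul, Real.norm_of_nonneg (by positivity), div_mul_cancel₀ _ hv']
    · rw [real_inner_smul_left, real_inner_self_eq_norm_sq, abs_of_nonneg (by positivity)]
      field_simp
  · rintro r ⟨w, hw, rfl⟩
    exact (abs_real_inner_le_norm w v).trans (mul_le_mul_of_nonneg_right hw (norm_nonneg v))

/-- The empirical Rademacher complexity of the norm-bounded linear class
`{x ↦ ⟪w, z⟫ : ‖w‖ ≤ Λ}` is bounded by `(2Λ/n)·√(∑ᵢ ‖zᵢ‖²)`. -/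
theorem erc_linear_class_bound
    {H : Type*} [NormedAddCommGroup H] [InnerProductSpace ℝ H]
    (n : ℕ) (z : Fin n → H) (Λ : ℝ) (hΛ : 0 < Λ) :
    (∑ ε : Fin n → Bool,
        sSup {r : ℝ | ∃ w : H, ‖w‖ ≤ Λ ∧
          r = |(2 / (n : ℝ)) * ∑ i, (if ε i then (1 : ℝ) else -1) * (inner ℝ w (z i) : ℝ)|}) / 2 ^ n
      ≤ (2 * Λ / n) * Real.sqrt (∑ i, ‖z i‖ ^ 2) := by
  have sup_eq : ∀ ε : Fin n → Bool,
      sSup {r : ℝ | ∃ w : H, ‖w‖ ≤ Λ ∧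
        r = |(2 / (n : ℝ)) * ∑ i, (if ε i then (1 : ℝ) else -1) * (inner ℝ w (z i) : ℝ)|}
      = 2 * Λ / n * ‖signedSum ε z‖ := by
    intro ε
    have inner_eq : ∀ w : H,
        (2 / (n : ℝ)) * ∑ i, (if ε i then (1 : ℝ) else -1) * (inner ℝ w (z i) : ℝ)
        = inner ℝ w ((2 / (n : ℝ)) • signedSum ε z) := fun w => by
      rw [real_inner_smul_right, inner_signedSum]; rfl
    simp_rw [inner_eq, (isGreatest_abs_inner_closedBall _ hΛ.le).csSup_eq, norm_smul,
      Real.norm_of_nonneg (by positivity : (0 : ℝ) ≤ 2 / n)]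
    ring
  simp_rw [sup_eq]
  calc (∑ ε : Fin n → Bool, 2 * Λ / n * ‖signedSum ε z‖) / 2 ^ n
      ≤ 2 * Λ / n * (2 ^ n * √(∑ i, ‖z i‖ ^ 2)) / 2 ^ n := by
        rw [← mul_sum]
        gcongr
        simpa using sum_norm_signedSum_le z
    _ = 2 * Λ / n * √(∑ i, ‖z i‖ ^ 2) := by field_simp
end
end

section
/- Let n, m, d be positive integers, Λ > 0, Δ ≥ 0, z_1,…,z_n ∈ ℝ^d and u_1,…,u_m ∈ ℝ^d. Let Z be the n×d matrix with rows z_1ᵀ,…,z_nᵀ, and let V be the 2m×d matrix whose first m rows are u_1ᵀ,…,u_mᵀ and whose last m rows are −u_1ᵀ,…,−u_mᵀ. Assume tr(ZᵀZ) > 0. For γ ≥ 0 set K(γ) = (1 + 2γm(Δ² + 1)/Λ²)^{1/2} and Σ(γ) = γ·tr(V·ZᵀZ·Vᵀ)/(tr(ZᵀZ)·tr(I_{2m} + γ·VVᵀ)). Then for every γ ≥ 0, E_σ[sup{|(2/n)·∑_{i=1}^n σ_i·⟨w, z_i⟩| : w ∈ ℝ^d, ‖w‖² ≤ Λ², wᵀVᵀVw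 ≤ 2m(Δ² + 1)}] ≤ (2Λ/n)·√(∑_{i=1}^n ‖z_i‖²)·K(γ)·(1 − Σ(γ))^{1/2}, where σ_1,…,σ_n are independent uniform {−1,+1}-valued random variables. -/
open Matrix

lemma sign_orth' (n : ℕ) (i j : Fin n) (hij : i ≠ j) :
    ∑ ε : Fin n → Bool, (if ε i then (1:ℝ) else -1) * (if ε j then (1:ℝ) else -1) = 0 := by
  apply Finset.sum_ninvolution (g := fun ε => Function.update ε i (!(ε i)))
  · intro ε
    have h1 : Function.update ε i (!(ε i)) i = !(ε i) := Function.update_self ..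
    have h2 : Function.update ε i (!(ε i)) j = ε j := Function.update_of_ne hij.symm _ _
    rw [h1, h2]
    cases ε i <;> cases ε j <;> norm_num
  · intro ε _
    intro hEq
    have := congrFun hEq i
    rw [Function.update_self] at this
    cases hb : ε i <;> simp_all
  · intro ε; exact Finset.mem_univ _
  · intro ε
    funext x
    by_cases hx : x = i
    · subst hx; simp
    · simp [Function.update_of_ne hx]

lemma dot_sum_sum' {k ι : Type*} [Fintype k] [Fintype ι] (c : ι → ℝ) (f : ι → k → ℝ) :
    (∑ i, c i • f i) ⬝ᵥ (∑ j, c j • f j) = ∑ i, ∑ j, c i * c j * (f i ⬝ᵥ f j) := by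
  simp only [dotProduct, Finset.sum_apply, Pi.smul_apply, smul_eq_mul,
    Finset.sum_mul_sum, Finset.mul_sum]
  rw [Finset.sum_comm]
  refine Finset.sum_congr rfl fun i _ => ?_
  rw [Finset.sum_comm]
  refine Finset.sum_congr rfl fun j _ => ?_
  rw [Finset.sum_mul]
  exact Finset.sum_congr rfl fun x _ => by ring

lemma mulVec_sum_smul' {k ι κ : Type*} [Fintype k] [Fintype ι] [Fintype κ]
    (W : Matrix κ k ℝ) (c : ι → ℝ) (f : ι → k → ℝ) :
    W *ᵥ (∑ i, c i • f i) = ∑ i, c i • (W *ᵥ f i) := by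
  simp [Matrix.mulVec_sum, Matrix.mulVec_smul]

lemma dot_sum_right' {k ι : Type*} [Fintype k] [Fintype ι] (w : k → ℝ) (c : ι → ℝ) (f : ι → k → ℝ) :
    w ⬝ᵥ (∑ i, c i • f i) = ∑ i, c i * (w ⬝ᵥ f i) := by
  simp only [dotProduct, Finset.sum_apply, Pi.smul_apply, smul_eq_mul, Finset.mul_sum]
  rw [Finset.sum_comm]
  exact Finset.sum_congr rfl fun i _ => Finset.sum_congr rfl fun l _ => by ring

lemma dot_sq_le' {k : Type*} [Fintype k] (x y : k → ℝ) :
    (x ⬝ᵥ y) ^ 2 ≤ (x ⬝ᵥ x) * (y ⬝ᵥ y) := by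
  simpa [dotProduct, ← sq] using Finset.sum_mul_sq_le_sq_mul_sq Finset.univ x y

lemma dot_self_nonneg' {k : Type*} [Fintype k] (x : k → ℝ) : 0 ≤ x ⬝ᵥ x :=
  Finset.sum_nonneg fun i _ => mul_self_nonneg _

lemma mulVec_dot_le' {ι k : Type*} [Fintype ι] [Fintype k] (W : Matrix ι k ℝ) (s : k → ℝ) :
    (W *ᵥ s) ⬝ᵥ (W *ᵥ s) ≤ (∑ j, ∑ l, W j l ^ 2) * (s ⬝ᵥ s) := by
  have h : ∀ j, ((W *ᵥ s) j) ^ 2 ≤ (∑ l, W j l ^ 2) * (s ⬝ᵥ s) := fun j => by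
    simpa [Matrix.mulVec, dotProduct, ← sq] using
      Finset.sum_mul_sq_le_sq_mul_sq Finset.univ (W j) s
  calc (W *ᵥ s) ⬝ᵥ (W *ᵥ s) = ∑ j, ((W *ᵥ s) j) ^ 2 := by
        simp [dotProduct, sq]
    _ ≤ ∑ j, (∑ l, W j l ^ 2) * (s ⬝ᵥ s) := Finset.sum_le_sum fun j _ => h j
    _ = (∑ j, ∑ l, W j l ^ 2) * (s ⬝ᵥ s) := by rw [Finset.sum_mul]

lemma scalar1' (u X P R al be γ Λsq B : ℝ) (hγ : 0 ≤ γ) (hal0 : 0 ≤ al) (hbe0 : 0 ≤ be)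
    (hP0 : 0 ≤ P) (hR0 : 0 ≤ R) (cs1 : u ^ 2 ≤ P * al) (cs2 : X ^ 2 ≤ R * be)
    (hw1 : P ≤ Λsq) (hw2 : R ≤ B) :
    (u + γ * X) ^ 2 ≤ (Λsq + γ * B) * (al + γ * be) := by
  have hS0 : 0 ≤ P * be + R * al := by positivity
  have hmul : (u * X) ^ 2 ≤ (P * al) * (R * be) := by
    calc (u * X) ^ 2 = u ^ 2 * X ^ 2 := by ring
      _ ≤ (P * al) * (R * be) := mul_le_mul cs1 cs2 (sq_nonneg _) (by positivity)
  have h4 : (2 * (u * X)) ^ 2 ≤ (P * be + R * al) ^ 2 := by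
    nlinarith [sq_nonneg (P * be - R * al)]
  have h5 : 2 * (u * X) ≤ P * be + R * al := by nlinarith [h4, hS0]
  have h6 : (u + γ * X) ^ 2 ≤ (P + γ * R) * (al + γ * be) := by
    nlinarith [mul_le_mul_of_nonneg_left h5 hγ,
      mul_le_mul_of_nonneg_left cs2 (mul_nonneg hγ hγ)]
  have h7 : (P + γ * R) * (al + γ * be) ≤ (Λsq + γ * B) * (al + γ * be) := by
    apply mul_le_mul_of_nonneg_right _ (by positivity)
    nlinarith [mul_le_mul_of_nonneg_left hw2 hγ]
  linarith

lemma scalar2' (be de tt τ T γ : ℝ) (hγ : 0 ≤ γ) (hbe0 : 0 ≤ be) (hde0 : 0 ≤ de)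
    (htt0 : 0 ≤ tt) (hτ : 0 ≤ τ) (h2m : 2 ≤ T - γ * τ) (htt_le : tt ≤ τ * de) :
    γ / T * (be + 2 * γ * de + γ ^ 2 * tt) ≤ γ * be + γ ^ 2 * de := by
  have hT0 : 0 < T := by nlinarith [mul_nonneg hγ hτ]
  rw [div_mul_eq_mul_div, div_le_iff₀ hT0]
  have e1 : γ ^ 3 * tt ≤ γ ^ 3 * (τ * de) :=
    mul_le_mul_of_nonneg_left htt_le (pow_nonneg hγ 3)
  have e2 : γ ^ 2 * de * (γ * τ) ≤ γ ^ 2 * de * (T - 2) :=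
    mul_le_mul_of_nonneg_left (by linarith) (by positivity)
  have e3 : 0 ≤ γ * be * (T - 1) := by
    apply mul_nonneg (mul_nonneg hγ hbe0); linarith [mul_nonneg hγ hτ]
  nlinarith [e1, e2, e3]

lemma key_quad' {d : ℕ} {mm : Type*} [Fintype mm] [DecidableEq mm] (V : Matrix mm (Fin d) ℝ)
    (γ : ℝ) (hγ : 0 ≤ γ) (hcard : 2 ≤ Fintype.card mm)
    (Λ B : ℝ) (hB : 0 ≤ B)
    (v w : Fin d → ℝ) (hw1 : w ⬝ᵥ w ≤ Λ ^ 2) (hw2 : (V *ᵥ w) ⬝ᵥ (V *ᵥ w) ≤ B) :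
    (w ⬝ᵥ v) ^ 2 ≤ (Λ ^ 2 + γ * B) *
      (v ⬝ᵥ v - γ / ((Fintype.card mm : ℝ) + γ * (∑ j, ∑ l, V j l ^ 2)) *
        ((V *ᵥ v) ⬝ᵥ (V *ᵥ v))) := by
  set τ := ∑ j, ∑ l, V j l ^ 2 with hτdef
  have hτ : 0 ≤ τ := by positivity
  set T := (Fintype.card mm : ℝ) + γ * τ with hTdef
  have hT2 : (2:ℝ) ≤ T := by
    have h2 : (2:ℝ) ≤ (Fintype.card mm : ℝ) := by exact_mod_cast hcard
    nlinarith
  have hT0 : 0 < T := by linarith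
  set M : Matrix (Fin d) (Fin d) ℝ := 1 + γ • (Vᵀ * V) with hMdef
  have hMvec : ∀ x : Fin d → ℝ, M *ᵥ x = x + γ • (Vᵀ *ᵥ (V *ᵥ x)) := fun x => by
    simp [hMdef, Matrix.add_mulVec, Matrix.one_mulVec, Matrix.smul_mulVec,
      Matrix.mulVec_mulVec]
  have htrans : ∀ (p : Fin d → ℝ) (s' : mm → ℝ), p ⬝ᵥ (Vᵀ *ᵥ s') = (V *ᵥ p) ⬝ᵥ s' :=
    fun p s' => by rw [Matrix.dotProduct_mulVec p Vᵀ, Matrix.vecMul_transpose]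
  have hMpd : M.PosDef := by
    rw [Matrix.posDef_iff_dotProduct_mulVec]
    constructor
    · rw [Matrix.IsHermitian, Matrix.conjTranspose_eq_transpose_of_trivial]
      simp [hMdef, Matrix.transpose_add, Matrix.transpose_smul, Matrix.transpose_mul]
    · intro x hx
      have hstar : star x = x := rfl
      have hexp : x ⬝ᵥ (M *ᵥ x) = x ⬝ᵥ x + γ * ((V *ᵥ x) ⬝ᵥ (V *ᵥ x)) := by
        rw [hMvec x, dotProduct_add, dotProduct_smul, smul_eq_mul, htrans]
      have hxx : 0 < x ⬝ᵥ x := by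
        obtain ⟨i, hi⟩ := Function.ne_iff.mp hx
        exact Finset.sum_pos' (fun i _ => mul_self_nonneg _)
          ⟨i, Finset.mem_univ i, mul_self_pos.mpr hi⟩
      rw [hstar, hexp]
      nlinarith [dot_self_nonneg' (V *ᵥ x), mul_nonneg hγ (dot_self_nonneg' (V *ᵥ x))]
  have hdet : IsUnit M.det := hMpd.det_pos.ne'.isUnit
  set y := M⁻¹ *ᵥ v with hydef
  have hv : v = y + γ • (Vᵀ *ᵥ (V *ᵥ y)) := by
    rw [← hMvec y, hydef, Matrix.mulVec_mulVec, Matrix.mul_nonsing_inv _ hdet,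
      Matrix.one_mulVec]
  set s := V *ᵥ y with hsdef
  set a := Vᵀ *ᵥ s with hadef
  set t := V *ᵥ a with htdef
  obtain ⟨al, hal⟩ : ∃ r, y ⬝ᵥ y = r := ⟨_, rfl⟩
  obtain ⟨be, hbe⟩ : ∃ r, s ⬝ᵥ s = r := ⟨_, rfl⟩
  obtain ⟨de, hde⟩ : ∃ r, a ⬝ᵥ a = r := ⟨_, rfl⟩
  obtain ⟨tt, htt⟩ : ∃ r, t ⬝ᵥ t = r := ⟨_, rfl⟩
  have hal0 : 0 ≤ al := hal ▸ dot_self_nonneg' y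
  have hbe0 : 0 ≤ be := hbe ▸ dot_self_nonneg' s
  have hde0 : 0 ≤ de := hde ▸ dot_self_nonneg' a
  have htt0 : 0 ≤ tt := htt ▸ dot_self_nonneg' t
  have hya : y ⬝ᵥ a = be := by rw [hadef, htrans, ← hsdef, ← hbe]
  have hay : a ⬝ᵥ y = be := by rw [dotProduct_comm, hya]
  have hst : s ⬝ᵥ t = de := by
    rw [htdef, Matrix.dotProduct_mulVec s V, ← Matrix.mulVec_transpose, ← hadef, ← hde]
  have hts : t ⬝ᵥ s = de := by rw [dotProduct_comm, hst]
  -- operator norm bounds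
  have hVt : ∀ x : Fin d → ℝ, (V *ᵥ x) ⬝ᵥ (V *ᵥ x) ≤ τ * (x ⬝ᵥ x) := fun x =>
    mulVec_dot_le' V x
  have hVTs : (Vᵀ *ᵥ s) ⬝ᵥ (Vᵀ *ᵥ s) ≤ τ * (s ⬝ᵥ s) := by
    have h := mulVec_dot_le' Vᵀ s
    have : (∑ l, ∑ j, (Vᵀ) l j ^ 2) = τ := by
      rw [hτdef, Finset.sum_comm]
      simp [Matrix.transpose_apply]
    rwa [this] at h
  have hde_le : de ≤ τ * be := by rw [← hde, ← hbe, hadef]; exact hVTs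
  have htt_le : tt ≤ τ * de := by rw [← htt, ← hde, htdef]; exact hVt a
  -- v expansions
  have hVv : V *ᵥ v = s + γ • t := by
    rw [hv, Matrix.mulVec_add, Matrix.mulVec_smul]
  have hvv : v ⬝ᵥ v = al + 2 * γ * be + γ ^ 2 * de := by
    rw [hv, add_dotProduct, dotProduct_add, dotProduct_add,
      smul_dotProduct, dotProduct_smul, smul_dotProduct,
      dotProduct_smul]
    simp only [smul_eq_mul]
    rw [hya, hay, hal, hde]; ring
  have hVvVv : (V *ᵥ v) ⬝ᵥ (V *ᵥ v) = be + 2 * γ * de + γ ^ 2 * tt := by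
    rw [hVv, add_dotProduct, dotProduct_add, dotProduct_add,
      smul_dotProduct, dotProduct_smul, smul_dotProduct,
      dotProduct_smul]
    simp only [smul_eq_mul]
    rw [hst, hts, hbe, htt]; ring
  have hyv : y ⬝ᵥ v = al + γ * be := by
    rw [hv, dotProduct_add, dotProduct_smul, smul_eq_mul, hya, hal]
  -- step 1 : (w ⬝ᵥ v)^2 ≤ (Λ^2 + γ B) * (al + γ be)
  have hwv : w ⬝ᵥ v = w ⬝ᵥ y + γ * ((V *ᵥ w) ⬝ᵥ s) := by
    rw [hv, dotProduct_add, dotProduct_smul, smul_eq_mul, htrans]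
  have hww0 : 0 ≤ w ⬝ᵥ w := dot_self_nonneg' w
  have hVw0 : 0 ≤ (V *ᵥ w) ⬝ᵥ (V *ᵥ w) := dot_self_nonneg' _
  have cs1' : (w ⬝ᵥ y) ^ 2 ≤ (w ⬝ᵥ w) * al := by rw [← hal]; exact dot_sq_le' w y
  have cs2' : ((V *ᵥ w) ⬝ᵥ s) ^ 2 ≤ ((V *ᵥ w) ⬝ᵥ (V *ᵥ w)) * be := by
    rw [← hbe]; exact dot_sq_le' _ s
  have step1 : (w ⬝ᵥ v) ^ 2 ≤ (Λ ^ 2 + γ * B) * (al + γ * be) := by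
    rw [hwv]
    exact scalar1' _ _ _ _ _ _ _ _ _ hγ hal0 hbe0 hww0 hVw0 cs1' cs2' hw1 hw2
  have step2 : al + γ * be ≤ v ⬝ᵥ v - γ / T * ((V *ᵥ v) ⬝ᵥ (V *ᵥ v)) := by
    have h2m : (2:ℝ) ≤ T - γ * τ := by
      have h2 : (2:ℝ) ≤ (Fintype.card mm : ℝ) := by exact_mod_cast hcard
      rw [hTdef]; linarith
    have hdiv := scalar2' be de tt τ T γ hγ hbe0 hde0 htt0 hτ h2m htt_le
    rw [hvv, hVvVv]; linarith
  have hq0 : 0 ≤ al + γ * be := by positivity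
  calc (w ⬝ᵥ v) ^ 2 ≤ (Λ ^ 2 + γ * B) * (al + γ * be) := step1
    _ ≤ (Λ ^ 2 + γ * B) * (v ⬝ᵥ v - γ / T * ((V *ᵥ v) ⬝ᵥ (V *ᵥ v))) := by
        apply mul_le_mul_of_nonneg_left step2
        nlinarith [sq_nonneg Λ]

set_option maxHeartbeats 1000000 in
/-- Empirical Rademacher complexity bound for the universum-constrained ellipsoidal
class: for every `γ ≥ 0`,
`E_σ[sup { |(2/n) ∑ᵢ σᵢ⟨w,zᵢ⟩| : ‖w‖² ≤ Λ², wᵀVᵀVw ≤ 2m(Δ²+1) }]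
  ≤ (2Λ/n)·√(∑ᵢ‖zᵢ‖²)·K(γ)·(1 − Σ(γ))^{1/2}`. -/
theorem erc_universum_bound
    (n m d : ℕ) (hn : 0 < n) (hm : 0 < m) (hd : 0 < d)
    (Λ : ℝ) (hΛ : 0 < Λ) (Δ : ℝ) (hΔ : 0 ≤ Δ)
    (z : Fin n → (Fin d → ℝ)) (u : Fin m → (Fin d → ℝ))
    (Z : Matrix (Fin n) (Fin d) ℝ) (hZ : Z = Matrix.of fun i l => z i l)
    (V : Matrix (Fin m ⊕ Fin m) (Fin d) ℝ)
    (hV : V = Matrix.of (Sum.elim (fun j l => u j l) (fun j l => -u j l)))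
    (htr : 0 < (Zᵀ * Z).trace)
    (K Sig : ℝ → ℝ)
    (hK : K = fun γ => Real.sqrt (1 + 2 * γ * m * (Δ ^ 2 + 1) / Λ ^ 2))
    (hSig : Sig = fun γ => γ * (V * (Zᵀ * Z) * Vᵀ).trace /
      ((Zᵀ * Z).trace * ((1 : Matrix (Fin m ⊕ Fin m) (Fin m ⊕ Fin m) ℝ) + γ • (V * Vᵀ)).trace)) :
    ∀ γ : ℝ, 0 ≤ γ →
      (∑ ε : Fin n → Bool,
          sSup {r : ℝ | ∃ w : Fin d → ℝ,
            w ⬝ᵥ w ≤ Λ ^ 2 ∧ (V *ᵥ w) ⬝ᵥ (V *ᵥ w) ≤ 2 * m * (Δ ^ 2 + 1) ∧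
            r = |(2 / (n : ℝ)) * ∑ i, (if ε i then (1 : ℝ) else -1) * (w ⬝ᵥ z i)|}) / 2 ^ n
        ≤ (2 * Λ / n) * Real.sqrt (∑ i, z i ⬝ᵥ z i) * K γ * Real.sqrt (1 - Sig γ) := by
  intro γ hγ
  -- basic quantities
  have hτ0 : (0:ℝ) ≤ ∑ j, ∑ l, V j l ^ 2 := by positivity
  have hcard : (2:ℕ) ≤ Fintype.card (Fin m ⊕ Fin m) := by
    simp [Fintype.card_sum]; omega
  have hcardR : (2:ℝ) ≤ (Fintype.card (Fin m ⊕ Fin m) : ℝ) := by exact_mod_cast hcard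
  set τ := ∑ j, ∑ l, V j l ^ 2 with hτdef
  set T := (Fintype.card (Fin m ⊕ Fin m) : ℝ) + γ * τ with hTdef
  have hT0 : 0 < T := by rw [hTdef]; nlinarith [mul_nonneg hγ hτ0]
  have hγτT : γ * τ ≤ T := by rw [hTdef]; nlinarith
  -- trace identities
  have htrace1 : (Zᵀ * Z).trace = ∑ i, z i ⬝ᵥ z i := by
    rw [hZ]
    simp only [Matrix.trace, Matrix.diag, Matrix.mul_apply, Matrix.transpose_apply,
      Matrix.of_apply, dotProduct]
    rw [Finset.sum_comm]
  have htrace2 : (V * (Zᵀ * Z) * Vᵀ).trace = ∑ i, (V *ᵥ z i) ⬝ᵥ (V *ᵥ z i) := by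
    have hfact : V * (Zᵀ * Z) * Vᵀ = (V * Zᵀ) * (Z * Vᵀ) := by
      rw [← Matrix.mul_assoc, Matrix.mul_assoc (V * Zᵀ)]
    rw [hfact]
    simp only [Matrix.trace, Matrix.diag, Matrix.mul_apply, Matrix.transpose_apply, hZ,
      Matrix.of_apply, Matrix.mulVec, dotProduct]
    rw [Finset.sum_comm]
    exact Finset.sum_congr rfl fun i _ => Finset.sum_congr rfl fun j _ => by
      congr 1 <;> exact Finset.sum_congr rfl fun l _ => by ring
  have htrace3 : ((1 : Matrix (Fin m ⊕ Fin m) (Fin m ⊕ Fin m) ℝ) + γ • (V * Vᵀ)).trace = T := by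
    rw [Matrix.trace_add, Matrix.trace_smul, Matrix.trace_one, hTdef]
    simp only [smul_eq_mul]
    congr 1
    rw [hτdef]
    simp only [Matrix.trace, Matrix.diag, Matrix.mul_apply, Matrix.transpose_apply, sq]
  have htrS : 0 < ∑ i, z i ⬝ᵥ z i := htrace1 ▸ htr
  have hW20 : 0 ≤ ∑ i, (V *ᵥ z i) ⬝ᵥ (V *ᵥ z i) :=
    Finset.sum_nonneg fun i _ => dot_self_nonneg' _
  have hSigγ : Sig γ = γ * (∑ i, (V *ᵥ z i) ⬝ᵥ (V *ᵥ z i)) / ((∑ i, z i ⬝ᵥ z i) * T) := by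
    rw [hSig]; simp only; rw [htrace1, htrace2, htrace3]
  -- the quadratic form Q and the constant C
  have hB0 : (0:ℝ) ≤ 2 * m * (Δ ^ 2 + 1) := by positivity
  have hC0 : (0:ℝ) ≤ Λ ^ 2 + γ * (2 * m * (Δ ^ 2 + 1)) := by positivity
  have hQ0 : ∀ v : Fin d → ℝ, 0 ≤ v ⬝ᵥ v - γ / T * ((V *ᵥ v) ⬝ᵥ (V *ᵥ v)) := by
    intro v
    have h1 : γ / T * ((V *ᵥ v) ⬝ᵥ (V *ᵥ v)) ≤ γ / T * (τ * (v ⬝ᵥ v)) :=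
      mul_le_mul_of_nonneg_left (mulVec_dot_le' V v) (by positivity)
    have h2 : γ / T * (τ * (v ⬝ᵥ v)) ≤ v ⬝ᵥ v := by
      rw [div_mul_eq_mul_div, div_le_iff₀ hT0]
      nlinarith [dot_self_nonneg' v, mul_le_mul_of_nonneg_right hγτT (dot_self_nonneg' v)]
    linarith
  -- the signed sums
  set cE : (Fin n → Bool) → Fin n → ℝ := fun ε i => if ε i then 1 else -1 with hcE
  set vv : (Fin n → Bool) → Fin d → ℝ := fun ε => ∑ i, cE ε i • z i with hvv
  -- the per-sample bound on the supremum
  have hsup : ∀ ε : Fin n → Bool,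
      sSup {r : ℝ | ∃ w : Fin d → ℝ,
          w ⬝ᵥ w ≤ Λ ^ 2 ∧ (V *ᵥ w) ⬝ᵥ (V *ᵥ w) ≤ 2 * m * (Δ ^ 2 + 1) ∧
          r = |(2 / (n : ℝ)) * ∑ i, (if ε i then (1 : ℝ) else -1) * (w ⬝ᵥ z i)|}
        ≤ 2 / n * (Real.sqrt (Λ ^ 2 + γ * (2 * m * (Δ ^ 2 + 1))) *
            Real.sqrt (vv ε ⬝ᵥ vv ε - γ / T * ((V *ᵥ vv ε) ⬝ᵥ (V *ᵥ vv ε)))) := by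
    intro ε
    apply Real.sSup_le
    · rintro r ⟨w, hw1, hw2, rfl⟩
      have hwsum : ∑ i, (if ε i then (1:ℝ) else -1) * (w ⬝ᵥ z i) = w ⬝ᵥ vv ε := by
        rw [hvv]; exact (dot_sum_right' w (cE ε) z).symm
      have hkey := key_quad' V γ hγ hcard Λ (2 * m * (Δ ^ 2 + 1)) hB0 (vv ε) w hw1 hw2
      rw [← hτdef, ← hTdef] at hkey
      have habs : |w ⬝ᵥ vv ε| ≤ Real.sqrt (Λ ^ 2 + γ * (2 * m * (Δ ^ 2 + 1))) *
          Real.sqrt (vv ε ⬝ᵥ vv ε - γ / T * ((V *ᵥ vv ε) ⬝ᵥ (V *ᵥ vv ε))) := by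
        calc |w ⬝ᵥ vv ε| = Real.sqrt ((w ⬝ᵥ vv ε) ^ 2) := (Real.sqrt_sq_eq_abs _).symm
          _ ≤ Real.sqrt ((Λ ^ 2 + γ * (2 * m * (Δ ^ 2 + 1))) *
              (vv ε ⬝ᵥ vv ε - γ / T * ((V *ᵥ vv ε) ⬝ᵥ (V *ᵥ vv ε)))) :=
            Real.sqrt_le_sqrt hkey
          _ = _ := Real.sqrt_mul hC0 _
      rw [hwsum, abs_mul, abs_of_nonneg (by positivity : (0:ℝ) ≤ 2 / (n:ℝ))]
      exact mul_le_mul_of_nonneg_left habs (by positivity)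
    · positivity
  -- orthogonality: the sum of the quadratic forms
  have horth : ∀ i j : Fin n, (∑ ε : Fin n → Bool, cE ε i * cE ε j)
      = if i = j then ((2:ℝ) ^ n) else 0 := by
    intro i j
    by_cases hij : i = j
    · subst hij
      simp only [if_pos rfl, hcE]
      have h1 : ∀ ε : Fin n → Bool, (if ε i then (1:ℝ) else -1) * (if ε i then (1:ℝ) else -1) = 1 := by
        intro ε; cases ε i <;> norm_num
      rw [Finset.sum_congr rfl fun ε _ => h1 ε, Finset.sum_const]
      simp [Finset.card_univ]
    · rw [if_neg hij]
      exact sign_orth' n i j hij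
  set D := ∑ i, (z i ⬝ᵥ z i - γ / T * ((V *ᵥ z i) ⬝ᵥ (V *ᵥ z i))) with hDdef
  have hD0 : 0 ≤ D := Finset.sum_nonneg fun i _ => hQ0 (z i)
  have hQsum : ∑ ε : Fin n → Bool,
      (vv ε ⬝ᵥ vv ε - γ / T * ((V *ᵥ vv ε) ⬝ᵥ (V *ᵥ vv ε))) = 2 ^ n * D := by
    have hexp : ∀ ε, vv ε ⬝ᵥ vv ε - γ / T * ((V *ᵥ vv ε) ⬝ᵥ (V *ᵥ vv ε))
        = ∑ i, ∑ j, cE ε i * cE ε j *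
            (z i ⬝ᵥ z j - γ / T * ((V *ᵥ z i) ⬝ᵥ (V *ᵥ z j))) := by
      intro ε
      have e1 : vv ε ⬝ᵥ vv ε = ∑ i, ∑ j, cE ε i * cE ε j * (z i ⬝ᵥ z j) := by
        rw [hvv]; exact dot_sum_sum' (cE ε) z
      have e2 : (V *ᵥ vv ε) ⬝ᵥ (V *ᵥ vv ε)
          = ∑ i, ∑ j, cE ε i * cE ε j * ((V *ᵥ z i) ⬝ᵥ (V *ᵥ z j)) := by
        rw [hvv]; simp only
        rw [mulVec_sum_smul' V (cE ε) z]; exact dot_sum_sum' (cE ε) _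
      rw [e1, e2, Finset.mul_sum, ← Finset.sum_sub_distrib]
      refine Finset.sum_congr rfl fun i _ => ?_
      rw [Finset.mul_sum, ← Finset.sum_sub_distrib]
      exact Finset.sum_congr rfl fun j _ => by ring
    calc ∑ ε : Fin n → Bool, (vv ε ⬝ᵥ vv ε - γ / T * ((V *ᵥ vv ε) ⬝ᵥ (V *ᵥ vv ε)))
        = ∑ ε : Fin n → Bool, ∑ i, ∑ j, cE ε i * cE ε j *
            (z i ⬝ᵥ z j - γ / T * ((V *ᵥ z i) ⬝ᵥ (V *ᵥ z j))) :=
          Finset.sum_congr rfl fun ε _ => hexp ε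
      _ = ∑ i, ∑ j, ∑ ε : Fin n → Bool, cE ε i * cE ε j *
            (z i ⬝ᵥ z j - γ / T * ((V *ᵥ z i) ⬝ᵥ (V *ᵥ z j))) := by
          rw [Finset.sum_comm]
          exact Finset.sum_congr rfl fun i _ => Finset.sum_comm
      _ = ∑ i, ∑ j, (∑ ε : Fin n → Bool, cE ε i * cE ε j) *
            (z i ⬝ᵥ z j - γ / T * ((V *ᵥ z i) ⬝ᵥ (V *ᵥ z j))) := by
          refine Finset.sum_congr rfl fun i _ => Finset.sum_congr rfl fun j _ => ?_
          rw [Finset.sum_mul]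
      _ = ∑ i, (2:ℝ) ^ n * (z i ⬝ᵥ z i - γ / T * ((V *ᵥ z i) ⬝ᵥ (V *ᵥ z i))) := by
          refine Finset.sum_congr rfl fun i _ => ?_
          rw [Finset.sum_congr rfl fun j (_ : j ∈ Finset.univ) => by rw [horth i j]]
          simp [Finset.sum_ite_eq, ite_mul]
      _ = 2 ^ n * D := by rw [hDdef, ← Finset.mul_sum]
  have hsumsqrt : ∑ ε : Fin n → Bool,
      Real.sqrt (vv ε ⬝ᵥ vv ε - γ / T * ((V *ᵥ vv ε) ⬝ᵥ (V *ᵥ vv ε)))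
      ≤ 2 ^ n * Real.sqrt D := by
    have hcs := Finset.sum_mul_sq_le_sq_mul_sq Finset.univ (fun _ : Fin n → Bool => (1:ℝ))
      (fun ε => Real.sqrt (vv ε ⬝ᵥ vv ε - γ / T * ((V *ᵥ vv ε) ⬝ᵥ (V *ᵥ vv ε))))
    simp only [one_mul, one_pow, Finset.sum_const, Finset.card_univ, nsmul_eq_mul, mul_one] at hcs
    have hsq : ∀ ε : Fin n → Bool,
        Real.sqrt (vv ε ⬝ᵥ vv ε - γ / T * ((V *ᵥ vv ε) ⬝ᵥ (V *ᵥ vv ε))) ^ 2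
        = vv ε ⬝ᵥ vv ε - γ / T * ((V *ᵥ vv ε) ⬝ᵥ (V *ᵥ vv ε)) := fun ε => Real.sq_sqrt (hQ0 _)
    rw [Finset.sum_congr rfl fun ε _ => hsq ε, hQsum] at hcs
    have hcardfun : (Fintype.card (Fin n → Bool) : ℝ) = 2 ^ n := by
      simp [Fintype.card_fun]
    rw [hcardfun] at hcs
    have hnn : 0 ≤ ∑ ε : Fin n → Bool,
        Real.sqrt (vv ε ⬝ᵥ vv ε - γ / T * ((V *ᵥ vv ε) ⬝ᵥ (V *ᵥ vv ε))) :=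
      Finset.sum_nonneg fun ε _ => Real.sqrt_nonneg _
    calc (∑ ε : Fin n → Bool, Real.sqrt (vv ε ⬝ᵥ vv ε - γ / T * ((V *ᵥ vv ε) ⬝ᵥ (V *ᵥ vv ε))))
        = Real.sqrt ((∑ ε : Fin n → Bool,
            Real.sqrt (vv ε ⬝ᵥ vv ε - γ / T * ((V *ᵥ vv ε) ⬝ᵥ (V *ᵥ vv ε)))) ^ 2) :=
          (Real.sqrt_sq hnn).symm
      _ ≤ Real.sqrt ((2:ℝ) ^ n * (2 ^ n * D)) := Real.sqrt_le_sqrt hcs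
      _ = 2 ^ n * Real.sqrt D := by
          rw [← mul_assoc, show ((2:ℝ) ^ n * 2 ^ n) = ((2:ℝ) ^ n) ^ 2 by ring,
            Real.sqrt_mul (sq_nonneg _), Real.sqrt_sq (by positivity)]
  -- final assembly
  have hpow : (0:ℝ) < 2 ^ n := by positivity
  have h1 : ∑ ε : Fin n → Bool,
      sSup {r : ℝ | ∃ w : Fin d → ℝ,
          w ⬝ᵥ w ≤ Λ ^ 2 ∧ (V *ᵥ w) ⬝ᵥ (V *ᵥ w) ≤ 2 * m * (Δ ^ 2 + 1) ∧
          r = |(2 / (n : ℝ)) * ∑ i, (if ε i then (1 : ℝ) else -1) * (w ⬝ᵥ z i)|}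
      ≤ ∑ ε : Fin n → Bool, 2 / n * (Real.sqrt (Λ ^ 2 + γ * (2 * m * (Δ ^ 2 + 1))) *
          Real.sqrt (vv ε ⬝ᵥ vv ε - γ / T * ((V *ᵥ vv ε) ⬝ᵥ (V *ᵥ vv ε)))) :=
    Finset.sum_le_sum fun ε _ => hsup ε
  have h2 : ∑ ε : Fin n → Bool, 2 / n * (Real.sqrt (Λ ^ 2 + γ * (2 * m * (Δ ^ 2 + 1))) *
        Real.sqrt (vv ε ⬝ᵥ vv ε - γ / T * ((V *ᵥ vv ε) ⬝ᵥ (V *ᵥ vv ε))))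
      = (2 / n * Real.sqrt (Λ ^ 2 + γ * (2 * m * (Δ ^ 2 + 1)))) *
        ∑ ε : Fin n → Bool,
          Real.sqrt (vv ε ⬝ᵥ vv ε - γ / T * ((V *ᵥ vv ε) ⬝ᵥ (V *ᵥ vv ε))) := by
    rw [Finset.mul_sum]
    exact Finset.sum_congr rfl fun ε _ => by ring
  have h3 : (2 / (n:ℝ) * Real.sqrt (Λ ^ 2 + γ * (2 * m * (Δ ^ 2 + 1)))) *
        (∑ ε : Fin n → Bool,
          Real.sqrt (vv ε ⬝ᵥ vv ε - γ / T * ((V *ᵥ vv ε) ⬝ᵥ (V *ᵥ vv ε))))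
      ≤ (2 / n * Real.sqrt (Λ ^ 2 + γ * (2 * m * (Δ ^ 2 + 1)))) * (2 ^ n * Real.sqrt D) :=
    mul_le_mul_of_nonneg_left hsumsqrt (by positivity)
  have hC_eq : Real.sqrt (Λ ^ 2 + γ * (2 * m * (Δ ^ 2 + 1))) = Λ * K γ := by
    rw [hK]; simp only
    rw [show Λ * Real.sqrt (1 + 2 * γ * m * (Δ ^ 2 + 1) / Λ ^ 2)
        = Real.sqrt (Λ ^ 2) * Real.sqrt (1 + 2 * γ * m * (Δ ^ 2 + 1) / Λ ^ 2) by
      rw [Real.sqrt_sq hΛ.le]]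
    rw [← Real.sqrt_mul (sq_nonneg Λ)]
    congr 1
    have hΛne : Λ ≠ 0 := hΛ.ne'
    field_simp
  have hD_eq : D = (∑ i, z i ⬝ᵥ z i) * (1 - Sig γ) := by
    have hD' : D = (∑ i, z i ⬝ᵥ z i) - γ / T * (∑ i, (V *ᵥ z i) ⬝ᵥ (V *ᵥ z i)) := by
      rw [hDdef, Finset.sum_sub_distrib, ← Finset.mul_sum]
    rw [hD', hSigγ]
    have h1' : (∑ i, z i ⬝ᵥ z i) ≠ 0 := htrS.ne'
    field_simp
  have hsqrtD : Real.sqrt D = Real.sqrt (∑ i, z i ⬝ᵥ z i) * Real.sqrt (1 - Sig γ) := by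
    rw [hD_eq, Real.sqrt_mul htrS.le]
  calc (∑ ε : Fin n → Bool,
          sSup {r : ℝ | ∃ w : Fin d → ℝ,
            w ⬝ᵥ w ≤ Λ ^ 2 ∧ (V *ᵥ w) ⬝ᵥ (V *ᵥ w) ≤ 2 * m * (Δ ^ 2 + 1) ∧
            r = |(2 / (n : ℝ)) * ∑ i, (if ε i then (1 : ℝ) else -1) * (w ⬝ᵥ z i)|}) / 2 ^ n
      ≤ ((2 / n * Real.sqrt (Λ ^ 2 + γ * (2 * m * (Δ ^ 2 + 1)))) * (2 ^ n * Real.sqrt D))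
          / 2 ^ n := by
        apply div_le_div_of_nonneg_right ?_ hpow.le
        calc _ ≤ _ := h1
          _ = _ := h2
          _ ≤ _ := h3
    _ = (2 / n * Real.sqrt (Λ ^ 2 + γ * (2 * m * (Δ ^ 2 + 1)))) * Real.sqrt D := by
        field_simp
    _ = (2 * Λ / n) * Real.sqrt (∑ i, z i ⬝ᵥ z i) * K γ * Real.sqrt (1 - Sig γ) := by
        rw [hC_eq, hsqrtD]; ring
end
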